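/- arXiv:1602.05205 — 5 statements merged into one kernel-verified Lean document; each statement's English description precedes it below -/
import Mathlib

section
/- Let f : ℝ^d → ℝ be a closed convex function. Then f is μ-strongly convex with respect to a norm ‖·‖ (with μ > 0) if and only if its convex conjugate f* is (1/μ)-smooth with respect to the dual norm ‖·‖*. -/
open scoped BigOperators ENNReal
open MeasureTheory

noncomputable section

abbrev Euc (n : ℕ) := EuclideanSpace ℝ (Fin n)

/-- `N` is a norm on `ℝ^n`. -/
def IsNorm {n : ℕ} (N : Euc n → ℝ) : Prop :=
  (∀ x, 0 ≤ N x) ∧ (∀ x, N x = 0 ↔ x = 0) ∧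
  (∀ (c : ℝ) (x), N (c • x) = |c| * N x) ∧
  (∀ x y, N (x + y) ≤ N x + N y)

/-- The dual norm `‖v‖_* = sup_{N u ≤ 1} ⟨v,u⟩`. -/
noncomputable def dualNorm {n : ℕ} (N : Euc n → ℝ) (v : Euc n) : ℝ :=
  sSup {r : ℝ | ∃ u, N u ≤ 1 ∧ r = (inner ℝ v u : ℝ)}

/-- Convex (Fenchel) conjugate of an `ℝ ∪ {+∞}`-valued function. -/
noncomputable def econj {n : ℕ} (g : Euc n → EReal) (v : Euc n) : EReal :=
  ⨆ u : Euc n, ((inner ℝ v u : ℝ) : EReal) - g u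

/-- Properness: never `-∞`, finite somewhere. -/
def EProper {n : ℕ} (g : Euc n → EReal) : Prop :=
  (∀ x, g x ≠ ⊥) ∧ ∃ x, g x ≠ ⊤

/-- Convexity of an extended-real-valued function. -/
def EConvex {n : ℕ} (g : Euc n → EReal) : Prop :=
  ∀ x y (a b : ℝ), 0 ≤ a → 0 ≤ b → a + b = 1 →
    g (a • x + b • y) ≤ (a : EReal) * g x + (b : EReal) * g y

/-- `u` is a subgradient of `g` at `x`. -/
def ESubgradAt {n : ℕ} (g : Euc n → EReal) (x u : Euc n) : Prop :=
  ∀ y, g x + ((inner ℝ u (y - x) : ℝ) : EReal) ≤ g y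

/-- `u` is a subgradient of a real-valued `f` at `x`. -/
def RSubgradAt {n : ℕ} (f : Euc n → ℝ) (x u : Euc n) : Prop :=
  ∀ y, f x + (inner ℝ u (y - x) : ℝ) ≤ f y

/-- One-dimensional convex conjugate. -/
noncomputable def econj1 (g : ℝ → EReal) (x : ℝ) : EReal :=
  ⨆ a : ℝ, ((x * a : ℝ) : EReal) - g a

def EProper1 (g : ℝ → EReal) : Prop := (∀ x, g x ≠ ⊥) ∧ ∃ x, g x ≠ ⊤

def EConvex1 (g : ℝ → EReal) : Prop :=
  ∀ x y (a b : ℝ), 0 ≤ a → 0 ≤ b → a + b = 1 →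
    g (a * x + b * y) ≤ (a : EReal) * g x + (b : EReal) * g y

def ESubgradAt1 (g : ℝ → EReal) (x u : ℝ) : Prop :=
  ∀ y, g x + ((u * (y - x) : ℝ) : EReal) ≤ g y

/-- Map a nonnegative extended real to `ℝ≥0∞` (junk on negatives). -/
noncomputable def toe (x : EReal) : ℝ≥0∞ :=
  if x = ⊤ then ⊤ else ENNReal.ofReal x.toReal

/-!
If `f` is `μ`-strongly convex, `⟪v, ·⟫ - f` decays quadratically, so the supremum defining
`f* v` is attained at some `x_v`, where `v` is a subgradient of `f`. The strong convexity
inequality at `x_w`, the generalized Cauchy–Schwarz inequality `⟪v, z⟫ ≤ ‖v‖_* N z` and Young's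
inequality give `f* u ≤ f* w + ⟪x_w, u - w⟫ + ‖u - w‖_*² / (2μ)`, while
`f* u ≥ f* w + ⟪x_w, u - w⟫` holds trivially; this sandwich also shows `∇f* w = x_w`.

Conversely, if `u` is a subgradient of `f` at `x`, Fenchel–Young makes `x` the gradient of `f*`
at `u`, and smoothness of `f*` at `u` gives
`f y ≥ f x + ⟪u, y - x⟫ + ⟪w, y - x⟫ - ‖w‖_*² / (2μ)` for every `w`. Choosing `w` by
Hahn–Banach with `‖w‖_* ≤ μ N (y - x)` and `⟪w, y - x⟫ = μ N (y - x)²` yields strong convexity.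
-/

open Set Filter Topology RealInnerProductSpace
open InnerProductSpace (toDual toDual_symm_apply)

section General

variable {E : Type*}

theorem ConvexOn.exists_subgradient [NormedAddCommGroup E] [NormedSpace ℝ E] {f : E → ℝ}
    (hf : ConvexOn ℝ univ f) (hc : Continuous f) (x : E) :
    ∃ L : E →L[ℝ] ℝ, ∀ y, f x + L (y - x) ≤ f y := by
  set S : Set (E × ℝ) := {p | p.1 ∈ univ ∧ f p.1 < p.2}
  have hSo : IsOpen S := by
    simpa [S] using isOpen_lt (hc.comp continuous_fst) continuous_snd
  obtain ⟨ℓ, hℓ⟩ := geometric_hahn_banach_open_point hf.convex_strict_epigraph hSo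
    (by simp [S] : (x, f x) ∉ S)
  set L := ℓ.comp (ContinuousLinearMap.inl ℝ E ℝ)
  set c := ℓ (0, 1)
  have hℓ_apply : ∀ y t, ℓ (y, t) = L y + t * c := fun y t => by
    have hyt : (y, t) = (y, 0) + t • ((0 : E), (1 : ℝ)) := by ext <;> simp
    rw [hyt, map_add, map_smul, smul_eq_mul]
    rfl
  have hlt : ∀ y ε, 0 < ε → L y + (f y + ε) * c < L x + f x * c := fun y ε hε => by
    simpa [S, hℓ_apply, hε] using hℓ (y, f y + ε)
  have hc : c < 0 := by nlinarith [hlt x 1 one_pos]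
  have hkey : ∀ y, L y + f y * c ≤ L x + f x * c := fun y =>
    le_of_forall_pos_lt_add fun ε hε => by
      have h := hlt y (ε / -c) (div_pos hε (neg_pos.2 hc))
      have hεc : ε / -c * c = -ε := by rw [div_neg, neg_mul, div_mul_cancel₀ _ hc.ne]
      linarith
  refine ⟨(-c)⁻¹ • L, fun y => ?_⟩
  have h : (L y - L x) / -c ≤ f y - f x :=
    (div_le_iff₀' (neg_pos.2 hc)).2 (by linarith [hkey y])
  rw [smul_apply, smul_eq_mul, map_sub, ← div_eq_inv_mul]
  linarith

theorem Continuous.exists_forall_ge_of_le_sub_sq [NormedAddCommGroup E] [ProperSpace E]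
    {g : E → ℝ} (hg : Continuous g) {A B c : ℝ} (hc : 0 < c)
    (h : ∀ y, g y ≤ A + B * ‖y‖ - c * ‖y‖ ^ 2) : ∃ m, ∀ y, g y ≤ g m := by
  refine hg.exists_forall_ge (tendsto_atBot_mono h ?_)
  have hlin : Tendsto (fun r : ℝ => B + -c * r) atTop atBot :=
    tendsto_atBot_add_const_left _ B (tendsto_id.const_mul_atTop_of_neg (neg_neg_of_pos hc))
  have hpoly : Tendsto (fun r : ℝ => A + r * (B + -c * r)) atTop atBot :=
    tendsto_atBot_add_const_left _ A (tendsto_id.atTop_mul_atBot₀ hlin)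
  exact (hpoly.comp tendsto_norm_cocompact_atTop).congr fun y => by
    simp only [Function.comp_apply]
    ring

variable [NormedAddCommGroup E] [InnerProductSpace ℝ E] [CompleteSpace E]

theorem hasGradientAt_of_le_of_le {φ : E → ℝ} {g w : E} {C : ℝ}
    (hlow : ∀ u, φ w + ⟪g, u - w⟫ ≤ φ u)
    (hup : ∀ u, φ u ≤ φ w + ⟪g, u - w⟫ + C * ‖u - w‖ ^ 2) : HasGradientAt φ g w := by
  rw [hasGradientAt_iff_isLittleO]
  have hsq : (fun u => ‖u - w‖ ^ 2) =o[𝓝 w] fun u => u - w :=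
    (Asymptotics.isLittleO_norm_pow_id one_lt_two).comp_tendsto
      (tendsto_sub_nhds_zero_iff.2 tendsto_id)
  refine Asymptotics.IsBigO.trans_isLittleO (Asymptotics.IsBigO.of_bound C ?_) hsq
  refine Eventually.of_forall fun u => ?_
  rw [Real.norm_eq_abs, abs_of_nonneg (by linarith [hlow u]), norm_pow, norm_norm]
  linarith [hup u]

theorem HasGradientAt.eq_of_forall_le {φ : E → ℝ} {g x u : E} (hφ : HasGradientAt φ g u)
    (h : ∀ v, φ u + ⟪x, v - u⟫ ≤ φ v) : g = x := by
  have hψ : HasFDerivAt (fun v => φ v - ⟪x, v⟫) (toDual ℝ E g - toDual ℝ E x) u :=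
    hφ.hasFDerivAt.sub (toDual ℝ E x).hasFDerivAt
  have hmin : IsLocalMin (fun v => φ v - ⟪x, v⟫) u :=
    Eventually.of_forall fun v => by have := h v; rw [inner_sub_right] at this; linarith
  exact (toDual ℝ E).injective (sub_eq_zero.1 (hmin.hasFDerivAt_eq_zero hψ))

end General

namespace IsNorm

variable {d : ℕ} {N : Euc d → ℝ}

theorem map_zero (hN : IsNorm N) : N 0 = 0 := by
  simpa using hN.2.2.1 0 0

theorem pos_of_ne_zero (hN : IsNorm N) {x : Euc d} (hx : x ≠ 0) : 0 < N x :=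
  (hN.1 x).lt_of_ne (Ne.symm (mt (hN.2.1 x).1 hx))

theorem smul_of_nonneg (hN : IsNorm N) {c : ℝ} (hc : 0 ≤ c) (x : Euc d) :
    N (c • x) = c * N x := by
  rw [hN.2.2.1, abs_of_nonneg hc]

theorem convexOn (hN : IsNorm N) : ConvexOn ℝ univ N :=
  ⟨convex_univ, fun x _ y _ a b ha hb _ => (hN.2.2.2 _ _).trans_eq <| by
    rw [hN.smul_of_nonneg ha, hN.smul_of_nonneg hb, smul_eq_mul, smul_eq_mul]⟩

protected theorem continuous (hN : IsNorm N) : Continuous N :=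
  continuousOn_univ.1 (hN.convexOn.continuousOn isOpen_univ)

theorem exists_pos_mul_norm_le (hN : IsNorm N) : ∃ a > 0, ∀ x, a * ‖x‖ ≤ N x := by
  rcases subsingleton_or_nontrivial (Euc d) with hE | hE
  · exact ⟨1, one_pos, fun x => by simp [Subsingleton.elim x 0, hN.map_zero]⟩
  obtain ⟨z, hz, hmin⟩ := (isCompact_sphere (0 : Euc d) 1).exists_isMinOn
    (NormedSpace.sphere_nonempty.2 zero_le_one) hN.continuous.continuousOn
  refine ⟨N z, hN.pos_of_ne_zero (ne_zero_of_mem_unit_sphere ⟨z, hz⟩), fun x => ?_⟩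
  rcases eq_or_ne x 0 with rfl | hx
  · simp [hN.map_zero]
  have hx' : 0 < ‖x‖ := norm_pos_iff.2 hx
  have h : N z ≤ N (‖x‖⁻¹ • x) := hmin (mem_sphere_zero_iff_norm.2 (norm_smul_inv_norm hx))
  rwa [hN.smul_of_nonneg (inv_nonneg.2 hx'.le), ← div_eq_inv_mul,
    le_div_iff₀ hx'] at h

end IsNorm

section DualNorm

variable {d : ℕ} {N : Euc d → ℝ}

theorem dualNorm_le_of_forall (hN : IsNorm N) {v : Euc d} {c : ℝ}
    (h : ∀ u, N u ≤ 1 → ⟪v, u⟫ ≤ c) : dualNorm N v ≤ c :=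
  csSup_le ⟨0, 0, by simp [hN.map_zero]⟩ (by rintro _ ⟨u, hu, rfl⟩; exact h u hu)

theorem inner_le_norm_div_of_le_one {a : ℝ} (ha : 0 < a) (hla : ∀ x, a * ‖x‖ ≤ N x)
    (v : Euc d) {u : Euc d} (hu : N u ≤ 1) : ⟪v, u⟫ ≤ ‖v‖ / a := by
  have hu' : ‖u‖ ≤ 1 / a := (le_div_iff₀' ha).2 ((hla u).trans hu)
  calc ⟪v, u⟫ ≤ ‖v‖ * ‖u‖ := real_inner_le_norm v u
    _ ≤ ‖v‖ * (1 / a) := by gcongr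
    _ = ‖v‖ / a := by ring

theorem dualNorm_le_norm_div (hN : IsNorm N) {a : ℝ} (ha : 0 < a) (hla : ∀ x, a * ‖x‖ ≤ N x)
    (v : Euc d) : dualNorm N v ≤ ‖v‖ / a :=
  dualNorm_le_of_forall hN fun _ => inner_le_norm_div_of_le_one ha hla v

theorem inner_le_dualNorm (hN : IsNorm N) (v : Euc d) {u : Euc d} (hu : N u ≤ 1) :
    ⟪v, u⟫ ≤ dualNorm N v := by
  obtain ⟨a, ha, hla⟩ := hN.exists_pos_mul_norm_le
  refine le_csSup ⟨‖v‖ / a, ?_⟩ ⟨u, hu, rfl⟩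
  rintro _ ⟨u', hu', rfl⟩
  exact inner_le_norm_div_of_le_one ha hla v hu'

theorem dualNorm_nonneg (hN : IsNorm N) (v : Euc d) : 0 ≤ dualNorm N v := by
  simpa using inner_le_dualNorm hN v (u := 0) (by simp [hN.map_zero])

theorem inner_le_dualNorm_mul (hN : IsNorm N) (v z : Euc d) :
    ⟪v, z⟫ ≤ dualNorm N v * N z := by
  rcases eq_or_ne z 0 with rfl | hz
  · simp [hN.map_zero]
  have hNz := hN.pos_of_ne_zero hz
  have h := inner_le_dualNorm hN v (u := (N z)⁻¹ • z)
    (by rw [hN.smul_of_nonneg (inv_nonneg.2 hNz.le), inv_mul_cancel₀ hNz.ne'])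
  rwa [real_inner_smul_right, ← div_eq_inv_mul, div_le_iff₀ hNz] at h

theorem dualNorm_smul_le (hN : IsNorm N) {s : ℝ} (hs : 0 ≤ s) (v : Euc d) :
    dualNorm N (s • v) ≤ s * dualNorm N v :=
  dualNorm_le_of_forall hN fun u hu => by
    rw [real_inner_smul_left]
    exact mul_le_mul_of_nonneg_left (inner_le_dualNorm hN v hu) hs

/-- Hahn–Banach: `N` is its own bidual norm, and the supremum is attained. -/
theorem exists_dualNorm_le_one_inner_eq (hN : IsNorm N) (z : Euc d) :
    ∃ w, dualNorm N w ≤ 1 ∧ ⟪w, z⟫ = N z := by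
  let p : Euc d →ₗ.[ℝ] ℝ := LinearPMap.mkSpanSingleton' z (N z) fun c hc => by
    rcases smul_eq_zero.1 hc with rfl | rfl <;> simp [hN.map_zero]
  have hp : ∀ (c : ℝ) (h), p ⟨c • z, h⟩ = c * N z := fun c h =>
    LinearPMap.mkSpanSingleton'_apply _ _ _ c h
  obtain ⟨g, hgp, hgN⟩ := exists_extension_of_le_sublinear p N
    (fun c hc x => hN.smul_of_nonneg hc.le x) hN.2.2.2 (by
      rintro ⟨_, hx⟩
      obtain ⟨c, rfl⟩ := Submodule.mem_span_singleton.1 hx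
      rw [hp, hN.2.2.1]
      exact mul_le_mul_of_nonneg_right (le_abs_self c) (hN.1 z))
  set w := (toDual ℝ (Euc d)).symm (LinearMap.toContinuousLinearMap g)
  have hw : ∀ u, ⟪w, u⟫ = g u := fun u => toDual_symm_apply
  refine ⟨w, dualNorm_le_of_forall hN fun u hu => (hw u).trans_le ((hgN u).trans hu), ?_⟩
  have hz : z ∈ p.domain := Submodule.mem_span_singleton_self z
  exact (hw z).trans ((hgp ⟨z, hz⟩).trans (LinearPMap.mkSpanSingleton'_apply_self _ _ _ _))

end DualNorm

section Conjugate

variable {d : ℕ} {f : Euc d → ℝ}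

theorem rSubgradAt_iff {x u : Euc d} :
    RSubgradAt f x u ↔ ∀ y, ⟪u, y⟫ - f y ≤ ⟪u, x⟫ - f x := by
  refine forall_congr' fun y => ?_
  rw [inner_sub_right]
  constructor <;> intro h <;> linarith

theorem econj_coe (v : Euc d) :
    econj (fun x => (f x : EReal)) v = ⨆ y, ((⟪v, y⟫ - f y : ℝ) : EReal) := by
  simp only [econj, EReal.coe_sub]

theorem econj_coe_eq_of_forall_le {v m : Euc d} (h : ∀ y, ⟪v, y⟫ - f y ≤ ⟪v, m⟫ - f m) :
    econj (fun x => (f x : EReal)) v = ((⟪v, m⟫ - f m : ℝ) : EReal) := by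
  rw [econj_coe]
  exact le_antisymm (iSup_le fun y => EReal.coe_le_coe_iff.2 (h y)) (le_iSup_of_le m le_rfl)

theorem inner_sub_le_of_econj_eq {v : Euc d} {r : ℝ}
    (h : econj (fun x => (f x : EReal)) v = (r : EReal)) (y : Euc d) : ⟪v, y⟫ - f y ≤ r := by
  rw [econj_coe] at h
  exact EReal.coe_le_coe_iff.1 (h ▸ le_iSup (fun y => ((⟪v, y⟫ - f y : ℝ) : EReal)) y)

theorem exists_rSubgradAt (hf : ConvexOn ℝ univ f) (x : Euc d) : ∃ u, RSubgradAt f x u := by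
  obtain ⟨L, hL⟩ := hf.exists_subgradient (continuousOn_univ.1 (hf.continuousOn isOpen_univ)) x
  exact ⟨(toDual ℝ (Euc d)).symm L, fun y => by
    rw [toDual_symm_apply]; exact hL y⟩

end Conjugate

def StronglyConvexWrt {d : ℕ} (N : Euc d → ℝ) (μ : ℝ) (f : Euc d → ℝ) : Prop :=
  ∀ x u, RSubgradAt f x u → ∀ y, f x + ⟪u, y - x⟫ + μ / 2 * N (y - x) ^ 2 ≤ f y

namespace StronglyConvexWrt

variable {d : ℕ} {N : Euc d → ℝ} {f : Euc d → ℝ} {μ : ℝ}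

theorem exists_forall_inner_sub_le (hN : IsNorm N) (hf : ConvexOn ℝ univ f) (hμ : 0 < μ)
    (hSC : StronglyConvexWrt N μ f) (v : Euc d) : ∃ m, ∀ y, ⟪v, y⟫ - f y ≤ ⟪v, m⟫ - f m := by
  obtain ⟨a, ha, hla⟩ := hN.exists_pos_mul_norm_le
  obtain ⟨u₀, hu₀⟩ := exists_rSubgradAt hf 0
  have hcont : Continuous fun y => ⟪v, y⟫ - f y :=
    (continuous_const.inner continuous_id).sub (continuousOn_univ.1 (hf.continuousOn isOpen_univ))
  refine hcont.exists_forall_ge_of_le_sub_sq (A := -f 0) (B := ‖v‖ + ‖u₀‖)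
    (by positivity : 0 < μ / 2 * a ^ 2) fun y => ?_
  have hgrowth := hSC 0 u₀ hu₀ y
  simp only [sub_zero] at hgrowth
  have hNy : (a * ‖y‖) ^ 2 ≤ N y ^ 2 := pow_le_pow_left₀ (by positivity) (hla y) 2
  have hv := real_inner_le_norm v y
  have hu := neg_le_of_abs_le (abs_real_inner_le_norm u₀ y)
  nlinarith

theorem inner_sub_le (hN : IsNorm N) (hμ : 0 < μ) (hSC : StronglyConvexWrt N μ f)
    {x w : Euc d} (hw : RSubgradAt f x w) (u y : Euc d) :
    ⟪u, y⟫ - f y ≤ ⟪w, x⟫ - f x + ⟪x, u - w⟫ + (1 / μ) / 2 * dualNorm N (u - w) ^ 2 := by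
  have hgrowth := hSC x w hw y
  set D := dualNorm N (u - w)
  set n := N (y - x)
  have hCS : ⟪u - w, y - x⟫ ≤ D * n := inner_le_dualNorm_mul hN (u - w) (y - x)
  have hYoung : μ / 2 * n ^ 2 + (1 / μ) / 2 * D ^ 2 - D * n = (μ * n - D) ^ 2 / (2 * μ) := by
    field_simp
    ring
  have hsplit : ⟪u, y⟫ = ⟪w, x⟫ + ⟪x, u - w⟫ + ⟪w, y - x⟫ + ⟪u - w, y - x⟫ := by
    simp only [inner_sub_left, inner_sub_right, real_inner_comm x]
    ring
  nlinarith [div_nonneg (sq_nonneg (μ * n - D)) (by positivity : (0 : ℝ) ≤ 2 * μ)]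

theorem exists_smooth_conj (hN : IsNorm N) (hf : ConvexOn ℝ univ f) (hμ : 0 < μ)
    (hSC : StronglyConvexWrt N μ f) :
    ∃ (φ : Euc d → ℝ) (φ' : Euc d → Euc d),
      (∀ v, econj (fun x => (f x : EReal)) v = (φ v : EReal)) ∧
      (∀ w, HasGradientAt φ (φ' w) w) ∧
      (∀ u w, φ u ≤ φ w + ⟪φ' w, u - w⟫ + (1 / μ) / 2 * dualNorm N (u - w) ^ 2) := by
  choose xv hxv using hSC.exists_forall_inner_sub_le hN hf hμ
  obtain ⟨a, ha, hla⟩ := hN.exists_pos_mul_norm_le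
  set φ := fun v => ⟪v, xv v⟫ - f (xv v)
  have hup : ∀ u w, φ u ≤ φ w + ⟪xv w, u - w⟫ + (1 / μ) / 2 * dualNorm N (u - w) ^ 2 :=
    fun u w => hSC.inner_sub_le hN hμ (rSubgradAt_iff.2 (hxv w)) u (xv u)
  have hlow : ∀ u w, φ w + ⟪xv w, u - w⟫ ≤ φ u := fun u w => by
    have h := hxv u (xv w)
    simp only [φ, inner_sub_right, real_inner_comm (xv w)] at h ⊢
    linarith
  refine ⟨φ, xv, fun v => econj_coe_eq_of_forall_le (hxv v), fun w => ?_, hup⟩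
  refine hasGradientAt_of_le_of_le (C := (1 / μ) / 2 / a ^ 2) (hlow · w) fun u =>
    (hup u w).trans ?_
  have hD : dualNorm N (u - w) ^ 2 ≤ ‖u - w‖ ^ 2 / a ^ 2 := by
    rw [← div_pow]
    exact pow_le_pow_left₀ (dualNorm_nonneg hN _) (dualNorm_le_norm_div hN ha hla _) 2
  calc _ ≤ φ w + ⟪xv w, u - w⟫ + (1 / μ) / 2 * (‖u - w‖ ^ 2 / a ^ 2) := by gcongr
    _ = _ := by ring

end StronglyConvexWrt

theorem stronglyConvexWrt_of_smooth_conj {d : ℕ} {N : Euc d → ℝ} {f : Euc d → ℝ} {μ : ℝ}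
    (hN : IsNorm N) (hμ : 0 < μ) {φ : Euc d → ℝ} {φ' : Euc d → Euc d}
    (hconj : ∀ v, econj (fun x => (f x : EReal)) v = (φ v : EReal))
    (hgrad : ∀ w, HasGradientAt φ (φ' w) w)
    (hsmooth : ∀ u w, φ u ≤ φ w + ⟪φ' w, u - w⟫ + (1 / μ) / 2 * dualNorm N (u - w) ^ 2) :
    StronglyConvexWrt N μ f := by
  intro x u hu y
  have hφ_ge : ∀ v z, ⟪v, z⟫ - f z ≤ φ v := fun v => inner_sub_le_of_econj_eq (hconj v)
  have hφu : φ u = ⟪u, x⟫ - f x :=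
    EReal.coe_injective ((hconj u).symm.trans (econj_coe_eq_of_forall_le (rSubgradAt_iff.1 hu)))
  -- Fenchel–Young makes `φ - ⟪x, ·⟫` minimal at `u`, so `∇φ u = x`.
  have hgrad_u : φ' u = x := (hgrad u).eq_of_forall_le fun v => by
    have h := hφ_ge v x
    rw [hφu, inner_sub_right, real_inner_comm v x, real_inner_comm u x]
    linarith
  have hdual : ∀ w, f x + ⟪u, y - x⟫ + (⟪w, y - x⟫ - (1 / μ) / 2 * dualNorm N w ^ 2) ≤ f y := by
    intro w
    have h1 := hsmooth (u + w) u
    have h2 := hφ_ge (u + w) y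
    rw [hgrad_u, add_sub_cancel_left, hφu] at h1
    simp only [inner_add_left, inner_sub_right, real_inner_comm x w] at h1 h2 ⊢
    linarith
  obtain ⟨w₀, hw₀, hw₀z⟩ := exists_dualNorm_le_one_inner_eq hN (y - x)
  set n := N (y - x)
  have hn : 0 ≤ μ * n := mul_nonneg hμ.le (hN.1 _)
  have hw : dualNorm N ((μ * n) • w₀) ≤ μ * n :=
    (dualNorm_smul_le hN hn w₀).trans (mul_le_of_le_one_right hn hw₀)
  have hsq : dualNorm N ((μ * n) • w₀) ^ 2 ≤ (μ * n) ^ 2 :=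
    pow_le_pow_left₀ (dualNorm_nonneg hN _) hw 2
  have h := hdual ((μ * n) • w₀)
  rw [real_inner_smul_left, hw₀z] at h
  have hμn : (1 / μ) / 2 * (μ * n) ^ 2 = μ / 2 * n ^ 2 := by field_simp
  nlinarith [mul_le_mul_of_nonneg_left hsq (by positivity : (0 : ℝ) ≤ (1 / μ) / 2)]

/-- a closed (real-valued) convex function `f` is `μ`-strongly convex w.r.t. a
norm `N` (μ > 0) iff its conjugate `f*` is `(1/μ)`-smooth w.r.t. the dual norm. -/
theorem stmt1 {d : ℕ} (N : Euc d → ℝ) (hN : IsNorm N)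
    (f : Euc d → ℝ) (hf : ConvexOn ℝ Set.univ f) (μ : ℝ) (hμ : 0 < μ) :
    (∀ x u, RSubgradAt f x u →
        ∀ y, f x + (inner ℝ u (y - x) : ℝ) + μ / 2 * (N (y - x)) ^ 2 ≤ f y)
      ↔
    (∃ (φ : Euc d → ℝ) (φ' : Euc d → Euc d),
      (∀ v, econj (fun x => (f x : EReal)) v = (φ v : EReal)) ∧
      (∀ w, HasGradientAt φ (φ' w) w) ∧
      (∀ u w, φ u ≤ φ w + (inner ℝ (φ' w) (u - w) : ℝ)
          + (1 / μ) / 2 * (dualNorm N (u - w)) ^ 2)) :=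
  ⟨StronglyConvexWrt.exists_smooth_conj hN hf hμ,
    fun ⟨_, _, hconj, hgrad, hsmooth⟩ =>
      stronglyConvexWrt_of_smooth_conj hN hμ hconj hgrad hsmooth⟩
end
end

section
/- Suppose f is (1/β)-smooth w.r.t. ‖·‖_f, g is μ-strongly convex (μ > 0) w.r.t. ‖·‖_g, and σ := (max_{α≠0} ‖Aα‖_f/‖α‖_g)². Then with the choice s = μ/(σ/β + μ), the improvement bound of the main lemma implies the pointwise inequality G(α) ≤ (1 + σ/(βμ)) · (D(α) - D(α⋆)) for every α ∈ dom D, where G is the duality gap and D(α) = f(Aα) + g(α) with minimizer α⋆. -/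
open scoped BigOperators ENNReal
open MeasureTheory

noncomputable section

/-!
Optimality of `α⋆` gives `-Aᵀ∇f(Aα⋆) ∈ ∂g(α⋆)`, so strong convexity bounds `g` from below by a
quadratic centred at `α⋆`. In the conjugate `g*(-Aᵀw)`, `w = ∇f(Aα)`, the cross term
`⟨∇f(Aα⋆) - w, A(u - α⋆)⟩` is then absorbed by that quadratic at the price of `σ/(βμ)` times the
Bregman divergence of `f` between `Aα` and `Aα⋆`. Strong convexity at `α` and smoothness of `f ∘ A`
bound what is left by `σ/(βμ) (D(α) - D(α⋆))`.
-/

open Set RealInnerProductSpace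

section Gradient

variable {E F : Type*} [NormedAddCommGroup E] [InnerProductSpace ℝ E] [CompleteSpace E]
  [NormedAddCommGroup F] [InnerProductSpace ℝ F] [CompleteSpace F]

lemma HasGradientAt.hasDerivAt_add_smul {f : E → ℝ} {w x : E} (hf : HasGradientAt f w x)
    (v : E) : HasDerivAt (fun t : ℝ => f (x + t • v)) ⟪w, v⟫ 0 := by
  have hline : HasDerivAt (fun t : ℝ => x + t • v) v 0 := by
    simpa using ((hasDerivAt_id (0 : ℝ)).smul_const v).const_add x
  have hf0 : HasFDerivAt f (InnerProductSpace.toDual ℝ E w) (x + (0 : ℝ) • v) := by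
    simpa using hf.hasFDerivAt
  exact hf0.comp_hasDerivAt (0 : ℝ) hline

lemma HasGradientAt.comp_continuousLinearMap {f : F → ℝ} {w : F} {x : E} (A : E →L[ℝ] F)
    (hf : HasGradientAt f w (A x)) :
    HasGradientAt (fun y => f (A y)) (ContinuousLinearMap.adjoint A w) x := by
  have hdual : (InnerProductSpace.toDual ℝ F w).comp A =
      InnerProductSpace.toDual ℝ E (ContinuousLinearMap.adjoint A w) := by
    ext v
    simp [ContinuousLinearMap.adjoint_inner_left]
  have hcomp := hf.hasFDerivAt.comp x A.hasFDerivAt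
  rw [hdual] at hcomp
  exact hcomp

lemma ConvexOn.add_inner_le_of_hasGradientAt {f : E → ℝ} {w x : E} (hfc : ConvexOn ℝ univ f)
    (hf : HasGradientAt f w x) (y : E) : f x + ⟪w, y - x⟫ ≤ f y := by
  have hline : ConvexOn ℝ univ (fun t : ℝ => f (x + t • (y - x))) := by
    simpa [Function.comp_def, AffineMap.lineMap_apply, add_comm] using
      hfc.comp_affineMap (AffineMap.lineMap x y)
  have hslope := hline.le_slope_of_hasDerivAt (mem_univ 0) (mem_univ 1) one_pos
    (hf.hasDerivAt_add_smul (y - x))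
  rw [slope_def_field] at hslope
  simp only [zero_smul, add_zero, one_smul, add_sub_cancel, sub_zero, div_one] at hslope
  linarith

lemma inner_sub_gradient_le_bregman_add {f : E → ℝ} {f' : E → E} {N : E → ℝ} {β : ℝ}
    (hfc : ConvexOn ℝ univ f) {y : E} (hf' : HasGradientAt f (f' y) y)
    (hsmooth : ∀ x y, f y ≤ f x + ⟪f' x, y - x⟫ + 1 / (2 * β) * N (y - x) ^ 2) (x z : E) :
    ⟪f' y - f' x, z⟫ ≤ f x - f y - ⟪f' y, x - y⟫ + 1 / (2 * β) * N z ^ 2 := by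
  have hlow := hfc.add_inner_le_of_hasGradientAt hf' (x + z)
  have hup := hsmooth x (x + z)
  rw [add_sub_cancel_left] at hup
  rw [show x + z - y = (x - y) + z by abel, inner_add_right] at hlow
  rw [inner_sub_left]
  linarith

end Gradient

lemma apply_le_add_inner_add_sq_of_smooth {G F : Type*} [TopologicalSpace G] [AddCommGroup G]
    [Module ℝ G] [NormedAddCommGroup F] [InnerProductSpace ℝ F] (A : G →L[ℝ] F) {f : F → ℝ}
    {f' : F → F} {Nf : F → ℝ} {Ng : G → ℝ} {β σ : ℝ} (hβ : 0 ≤ β)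
    (hsmooth : ∀ x y, f y ≤ f x + ⟪f' x, y - x⟫ + 1 / (2 * β) * Nf (y - x) ^ 2)
    (hσA : ∀ x, Nf (A x) ^ 2 ≤ σ * Ng x ^ 2) (x y : G) :
    f (A y) ≤ f (A x) + ⟪f' (A x), A y - A x⟫ + σ / (2 * β) * Ng (y - x) ^ 2 := by
  have hquad : 1 / (2 * β) * Nf (A y - A x) ^ 2 ≤ σ / (2 * β) * Ng (y - x) ^ 2 :=
    calc _ ≤ 1 / (2 * β) * (σ * Ng (y - x) ^ 2) := by
          rw [← map_sub]; gcongr; exact hσA _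
      _ = _ := by ring
  linarith [hsmooth (A x) (A y)]

lemma nonneg_of_hasDerivAt_of_forall_le {φ : ℝ → ℝ} {d a b : ℝ} (hab : a < b)
    (hφ : HasDerivAt φ d a) (h : ∀ t ∈ Icc a b, φ a ≤ φ t) : 0 ≤ d := by
  have hmin : IsLocalMinOn φ (Icc a b) a := IsMinOn.localize h
  have hcone : b - a ∈ posTangentConeAt (Icc a b) a :=
    sub_mem_posTangentConeAt_of_segment_subset (segment_eq_Icc hab.le).subset
  have := hmin.hasFDerivWithinAt_nonneg hφ.hasDerivWithinAt.hasFDerivWithinAt hcone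
  simp only [ContinuousLinearMap.toSpanSingleton_apply, smul_eq_mul] at this
  exact nonneg_of_mul_nonneg_right this (sub_pos.mpr hab)

lemma IsNorm.sub_comm {n : ℕ} {N : Euc n → ℝ} (hN : IsNorm N) (x y : Euc n) :
    N (x - y) = N (y - x) := by
  rw [← neg_sub, ← neg_one_smul ℝ (y - x), hN.2.2.1, abs_neg, abs_one, one_mul]

lemma inner_le_mul_add_of_sq_le {d : ℕ} {N : Euc d → ℝ} (hN : IsNorm N) {q z : Euc d}
    {B β μ σ s : ℝ} (hβ : 0 < β) (hμ : 0 < μ) (hσ : 0 ≤ σ)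
    (hq : ∀ z, ⟪q, z⟫ ≤ B + 1 / (2 * β) * N z ^ 2) (hz : N z ^ 2 ≤ σ * s ^ 2) :
    ⟪q, z⟫ ≤ σ / (β * μ) * B + μ / 2 * s ^ 2 := by
  rcases hσ.eq_or_lt with rfl | hσ
  · have hz0 : z = 0 := (hN.2.1 z).mp (by nlinarith [hN.1 z])
    simp only [hz0, inner_zero_right, zero_div, zero_mul, zero_add]
    positivity
  · -- test `hq` against `c • z`: for this `c` the quadratic term is exactly `c · μ/2 · s²`
    set c := β * μ / σ with hc
    have hc0 : 0 < c := by positivity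
    have h := hq (c • z)
    rw [real_inner_smul_right, hN.2.2.1, abs_of_pos hc0] at h
    have hquad : 1 / (2 * β) * (c * N z) ^ 2 ≤ c * (μ / 2 * s ^ 2) :=
      calc 1 / (2 * β) * (c * N z) ^ 2 = c ^ 2 / (2 * β) * N z ^ 2 := by ring
        _ ≤ c ^ 2 / (2 * β) * (σ * s ^ 2) := by gcongr
        _ = c * (μ / 2 * s ^ 2) := by rw [hc]; field_simp
    have hdiv : σ / (β * μ) * B = B / c := by rw [hc]; field_simp
    rw [hdiv, div_add' _ _ _ hc0.ne', le_div_iff₀ hc0]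
    linarith

lemma eSubgradAt_neg_of_forall_add_le {n : ℕ} {h : Euc n → ℝ} {g : Euc n → EReal}
    {x p : Euc n} (hgc : EConvex g) (hg : ∀ y, g y ≠ ⊥) (hx : g x ≠ ⊤)
    (hh : HasGradientAt h p x) (hmin : ∀ y, (h x : EReal) + g x ≤ h y + g y) :
    ESubgradAt g x (-p) := by
  intro y
  by_cases hy : g y = ⊤
  · simp [hy]
  obtain ⟨a, ha⟩ : ∃ a : ℝ, g x = a := ⟨_, (EReal.coe_toReal hx (hg x)).symm⟩
  obtain ⟨c, hc⟩ : ∃ c : ℝ, g y = c := ⟨_, (EReal.coe_toReal hy (hg y)).symm⟩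
  rw [ha, hc, ← EReal.coe_add, EReal.coe_le_coe_iff, inner_neg_left]
  -- on the segment `[x, y]`, `h` plus the chord of `g` lies above `h + g`, so it is least at `x`
  have hseg : ∀ t ∈ Icc (0 : ℝ) 1, h x ≤ h (x + t • (y - x)) + t * (c - a) := by
    intro t ht
    have hconv := hgc x y (1 - t) t (by linarith [ht.2]) ht.1 (by ring)
    rw [show (1 - t) • x + t • y = x + t • (y - x) by module, ha, hc] at hconv
    have hm := (hmin (x + t • (y - x))).trans (add_le_add le_rfl hconv)
    rw [ha] at hm
    norm_cast at hm
    linarith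
  have hderiv := (hh.hasDerivAt_add_smul (y - x)).add ((hasDerivAt_id (0 : ℝ)).mul_const (c - a))
  have := nonneg_of_hasDerivAt_of_forall_le one_pos hderiv (by simpa using hseg)
  linarith

lemma econj_add_le_coe {n : ℕ} {g : Euc n → EReal} (hg : ∀ u, g u ≠ ⊥) {v : Euc n} {r M : ℝ}
    (h : ∀ u (c : ℝ), g u = c → ⟪v, u⟫ - c + r ≤ M) : econj g v + r ≤ M := by
  rw [← EReal.le_sub_iff_add_le (.inl (EReal.coe_ne_bot r)) (.inl (EReal.coe_ne_top r)),
    ← EReal.coe_sub]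
  refine iSup_le fun u => ?_
  by_cases hu : g u = ⊤
  · simp [hu]
  · rw [← EReal.coe_toReal hu (hg u), ← EReal.coe_sub, EReal.coe_le_coe_iff, le_sub_iff_add_le]
    exact h u _ (EReal.coe_toReal hu (hg u)).symm

/-- with `f` `(1/β)`-smooth, `g` `μ`-strongly convex (`μ > 0`) and
`σ` the squared operator norm of `A` (i.e. `‖Ax‖_f² ≤ σ ‖x‖_g²`), the duality gap
satisfies `G(α) ≤ (1 + σ/(βμ)) (D(α) - D(α⋆))` for every `α ∈ dom D`. -/
theorem stmt6 {d n : ℕ} (A : Euc n →L[ℝ] Euc d)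
    (Nf : Euc d → ℝ) (hNf : IsNorm Nf) (Ng : Euc n → ℝ) (hNg : IsNorm Ng)
    (f : Euc d → ℝ) (hfc : ConvexOn ℝ Set.univ f)
    (f' : Euc d → Euc d) (hf' : ∀ x, HasGradientAt f (f' x) x)
    (β : ℝ) (hβ : 0 < β)
    (hsmooth : ∀ x y, f y ≤ f x + (inner ℝ (f' x) (y - x) : ℝ)
        + 1 / (2 * β) * (Nf (y - x)) ^ 2)
    (g : Euc n → EReal) (hg : EProper g) (hgc : EConvex g)
    (μ : ℝ) (hμ : 0 < μ)
    (hgsc : ∀ x u, ESubgradAt g x u → ∀ y,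
        g x + (((inner ℝ u (y - x) : ℝ) + μ / 2 * (Ng (y - x)) ^ 2 : ℝ) : EReal) ≤ g y)
    (σ : ℝ) (hσ0 : 0 ≤ σ) (hσA : ∀ x, (Nf (A x)) ^ 2 ≤ σ * (Ng x) ^ 2)
    (αstar : Euc n)
    (hstar : ∀ α : Euc n,
        ((f (A αstar) : ℝ) : EReal) + g αstar ≤ ((f (A α) : ℝ) : EReal) + g α)
    (α : Euc n) (hα : g α ≠ ⊤) :
    econj g (-(ContinuousLinearMap.adjoint A) (f' (A α))) + g α
        + ((inner ℝ (f' (A α)) (A α) : ℝ) : EReal)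
      ≤ ((1 + σ / (β * μ) : ℝ) : EReal)
          * ((((f (A α) : ℝ) : EReal) + g α)
              - (((f (A αstar) : ℝ) : EReal) + g αstar)) := by
  obtain ⟨hgbot, -⟩ := hg
  obtain ⟨a, ha⟩ : ∃ a : ℝ, g α = a := ⟨_, (EReal.coe_toReal hα (hgbot α)).symm⟩
  have hstar_top : g αstar ≠ ⊤ := fun h => by
    simpa [h, ha, ← EReal.coe_add] using hstar α
  obtain ⟨b, hb⟩ : ∃ b : ℝ, g αstar = b := ⟨_, (EReal.coe_toReal hstar_top (hgbot αstar)).symm⟩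
  have hsub : ESubgradAt g αstar (-ContinuousLinearMap.adjoint A (f' (A αstar))) :=
    eSubgradAt_neg_of_forall_add_le hgc hgbot hstar_top
      ((hf' (A αstar)).comp_continuousLinearMap A) hstar
  have hgrowth : ∀ u (c : ℝ), g u = c →
      b - ⟪f' (A αstar), A u - A αstar⟫ + μ / 2 * Ng (u - αstar) ^ 2 ≤ c := by
    intro u c hc
    have := hgsc _ _ hsub u
    rw [hb, hc, ← EReal.coe_add, EReal.coe_le_coe_iff, inner_neg_left,
      ContinuousLinearMap.adjoint_inner_left, map_sub] at this
    linarith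
  have hcross : ∀ u, ⟪f' (A αstar) - f' (A α), A (u - αstar)⟫
      ≤ σ / (β * μ) * (f (A α) - f (A αstar) - ⟪f' (A αstar), A α - A αstar⟫)
        + μ / 2 * Ng (u - αstar) ^ 2 := fun u =>
    inner_le_mul_add_of_sq_le hNf hβ hμ hσ0
      (inner_sub_gradient_le_bregman_add hfc (hf' (A αstar)) hsmooth (A α)) (hσA _)
  have hsmooth_comp := apply_le_add_inner_add_sq_of_smooth A hβ.le hsmooth hσA α αstar
  rw [hNg.sub_comm] at hsmooth_comp
  rw [ha, hb, add_assoc, ← EReal.coe_add, ← EReal.coe_add, ← EReal.coe_add, ← EReal.coe_sub,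
    ← EReal.coe_mul]
  refine econj_add_le_coe hgbot fun u c hc => ?_
  have hK : σ / (β * μ) * (μ / 2 * Ng (α - αstar) ^ 2) = σ / (2 * β) * Ng (α - αstar) ^ 2 := by
    field_simp
  have hgrowthα := mul_le_mul_of_nonneg_left (hgrowth α a ha) (by positivity : 0 ≤ σ / (β * μ))
  have hgrowthu := hgrowth u c hc
  have hcrossu := hcross u
  rw [inner_neg_left, ContinuousLinearMap.adjoint_inner_left]
  simp only [map_sub, inner_sub_left, inner_sub_right]
    at hgrowthα hgrowthu hcrossu hsmooth_comp ⊢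
  linarith
end
end

section
/- Lipschitzing trick for L1: let g(α) := λ‖α‖₁ on ℝ^n with λ > 0, and define ḡ(α) := g(α) if ‖α‖₁ ≤ B and +∞ otherwise. Then the convex conjugate of ḡ is ḡ*(u) = B·max{0, ‖u‖_∞ - λ}. -/
open scoped BigOperators ENNReal
open MeasureTheory

noncomputable section

/-! The conjugate is the supremum of `⟨u, α⟩ - λ‖α‖₁` over the ball `‖α‖₁ ≤ B`. By Hölder,
`⟨u, α⟩ - λ‖α‖₁ ≤ (‖u‖_∞ - λ)‖α‖₁ ≤ B max{0, ‖u‖_∞ - λ}`. The bound is attained at `α = 0` when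
`‖u‖_∞ ≤ λ`, and otherwise at `α = ±B eᵢ`, where `i` is a coordinate maximising `|uᵢ|` and the sign
is that of `uᵢ`. -/

open scoped InnerProductSpace

section LOneLInfty

variable {ι : Type*} [Fintype ι]

lemma EuclideanSpace.real_inner_eq_sum_mul (u α : EuclideanSpace ℝ ι) :
    ⟪u, α⟫_ℝ = ∑ i, u i * α i := by
  simp [PiLp.inner_apply, mul_comm]

lemma EuclideanSpace.real_inner_le_iSup_abs_mul_sum_abs (u α : EuclideanSpace ℝ ι) :
    ⟪u, α⟫_ℝ ≤ (⨆ i, |u i|) * ∑ i, |α i| := by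
  have hbdd : BddAbove (Set.range fun i => |u i|) := (Set.finite_range _).bddAbove
  rw [EuclideanSpace.real_inner_eq_sum_mul, Finset.mul_sum]
  refine Finset.sum_le_sum fun i _ => ?_
  calc u i * α i ≤ |u i| * |α i| := (le_abs_self _).trans (abs_mul _ _).le
    _ ≤ (⨆ j, |u j|) * |α i| := by gcongr; exact le_ciSup hbdd i

lemma EuclideanSpace.exists_sum_abs_eq_real_inner_eq_iSup_abs [Nonempty ι] (u : EuclideanSpace ℝ ι)
    {B : ℝ} (hB : 0 ≤ B) :
    ∃ α : EuclideanSpace ℝ ι, ∑ i, |α i| = B ∧ ⟪u, α⟫_ℝ = B * ⨆ i, |u i| := by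
  classical
  obtain ⟨i₀, hi₀⟩ := exists_eq_ciSup_of_finite (f := fun i => |u i|)
  refine ⟨EuclideanSpace.single i₀ (if 0 ≤ u i₀ then B else -B), ?_, ?_⟩
  · simp only [PiLp.single_apply, apply_ite abs, abs_zero, Finset.sum_ite_eq', Finset.mem_univ,
      if_true]
    split_ifs <;> simp [abs_of_nonneg hB]
  · rw [EuclideanSpace.inner_single_right, ← hi₀]
    split_ifs with h
    · simp [abs_of_nonneg h]
    · simp [abs_of_neg (not_le.mp h)]

theorem EuclideanSpace.isGreatest_real_inner_sub_mul_sum_abs {lam B : ℝ} (hlam : 0 ≤ lam)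
    (hB : 0 ≤ B) (u : EuclideanSpace ℝ ι) :
    IsGreatest ((fun α : EuclideanSpace ℝ ι => ⟪u, α⟫_ℝ - lam * ∑ i, |α i|) ''
        {α | ∑ i, |α i| ≤ B})
      (B * max 0 ((⨆ i, |u i|) - lam)) := by
  set S := ⨆ i, |u i|
  constructor
  · rcases le_or_gt S lam with hS | hS
    · refine ⟨0, by simpa using hB, ?_⟩
      simp [max_eq_left (sub_nonpos.mpr hS)]
    · have : Nonempty ι := by
        by_contra h
        rw [not_nonempty_iff] at h
        have : S = 0 := Real.iSup_of_isEmpty _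
        linarith
      obtain ⟨α, hα, hinner⟩ := exists_sum_abs_eq_real_inner_eq_iSup_abs u hB
      refine ⟨α, hα.le, ?_⟩
      simp only [hinner, hα, max_eq_right (sub_nonneg.mpr hS.le)]
      ring
  · rintro _ ⟨α, hα, rfl⟩
    calc ⟪u, α⟫_ℝ - lam * ∑ i, |α i| ≤ (S - lam) * ∑ i, |α i| := by
          linarith [real_inner_le_iSup_abs_mul_sum_abs u α]
      _ ≤ max 0 (S - lam) * ∑ i, |α i| := by gcongr; exact le_max_right _ _
      _ ≤ max 0 (S - lam) * B := by gcongr; exact hα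
      _ = B * max 0 (S - lam) := mul_comm _ _

end LOneLInfty

lemma econj_ite_top_eq_of_isGreatest {n : ℕ} (p : Euc n → Prop) [DecidablePred p]
    (f : Euc n → ℝ) (u : Euc n) {c : ℝ}
    (hc : IsGreatest ((fun α => ⟪u, α⟫_ℝ - f α) '' {α | p α}) c) :
    econj (fun α => if p α then (f α : EReal) else ⊤) u = c := by
  obtain ⟨⟨α₀, hα₀ : p α₀, rfl⟩, hub⟩ := hc
  refine le_antisymm (iSup_le fun α => ?_) (le_iSup_of_le α₀ ?_)
  · by_cases hα : p α
    · simpa only [hα, if_true, ← EReal.coe_sub, EReal.coe_le_coe_iff] using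
        hub ⟨α, hα, rfl⟩
    · simp only [hα, if_false, EReal.sub_top, bot_le]
  · simp [hα₀]

/-- Lipschitzing trick for L1: the conjugate of
`ḡ(α) = λ‖α‖₁` restricted to the ball `‖α‖₁ ≤ B` (and `+∞` outside)
is `ḡ*(u) = B max{0, ‖u‖_∞ - λ}`. -/
theorem stmt12 {n : ℕ} (lam B : ℝ) (hlam : 0 < lam) (hB : 0 < B) (u : Euc n) :
    econj (fun α : Euc n =>
        if (∑ i, |α i|) ≤ B then ((lam * ∑ i, |α i| : ℝ) : EReal) else (⊤ : EReal)) u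
      = ((B * max 0 ((⨆ i, |u i|) - lam) : ℝ) : EReal) :=
  econj_ite_top_eq_of_isGreatest (fun α : Euc n => ∑ i, |α i| ≤ B) _ u
    (EuclideanSpace.isGreatest_real_inner_sub_mul_sum_abs hlam.le hB.le u)
end
end

section
/- Elastic Net duality gap: for the problem min_α ℓ(Aα) + λ((η/2)‖α‖₂² + (1-η)‖α‖₁) with ℓ convex differentiable, λ > 0, η ∈ (0,1], and w = ∇ℓ(Aα), the duality gap equals G(α) = ⟨w, Aα⟩ + (1/(2ηλ))·Σᵢ ( max{0, |A_{:i}ᵀ w| - (1-η)λ} )² + λ((η/2)‖α‖₂² + (1-η)‖α‖₁). -/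
open scoped BigOperators ENNReal
open MeasureTheory

noncomputable section

open scoped RealInnerProductSpace

/-! The gap is the sum of two convex conjugates, each evaluated by exhibiting a maximiser.
For the loss, convexity makes the linearisation at `Aα` a global lower bound of `ℓ`, so `u = Aα`
maximises `⟪w, u⟫ - ℓ u` (the Fenchel–Young equality). The Elastic Net regulariser is separable,
so its conjugate is a sum of one-dimensional conjugates
`sup_t (v t - k t² / 2 - c |t|) = [|v| - c]₊² / (2k)`, attained at the soft-thresholded point
`sign v · [|v| - c]₊ / k`. -/

theorem ConvexOn.inner_gradient_le_sub {E : Type*} [NormedAddCommGroup E] [InnerProductSpace ℝ E]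
    [CompleteSpace E] {f : E → ℝ} (hf : ConvexOn ℝ Set.univ f) {x w : E}
    (hw : HasGradientAt f w x) (y : E) :
    ⟪w, y - x⟫ ≤ f y - f x := by
  set line : ℝ →ᵃ[ℝ] E := AffineMap.lineMap x y
  have hline : ConvexOn ℝ Set.univ (f ∘ line) := hf.comp_affineMap line
  have hderiv : HasDerivAt (f ∘ line) ⟪w, y - x⟫ 0 := by
    simpa using hw.hasFDerivAt.comp_hasDerivAt_of_eq (0 : ℝ) AffineMap.hasDerivAt_lineMap
      (AffineMap.lineMap_apply_zero x y).symm
  simpa [slope_def_field, line] using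
    hline.le_slope_of_hasDerivAt (Set.mem_univ 0) (Set.mem_univ 1) zero_lt_one hderiv

theorem ConvexOn.isGreatest_inner_sub_of_hasGradientAt {E : Type*} [NormedAddCommGroup E]
    [InnerProductSpace ℝ E] [CompleteSpace E] {f : E → ℝ} (hf : ConvexOn ℝ Set.univ f) {x w : E}
    (hw : HasGradientAt f w x) :
    IsGreatest (Set.range fun u => ⟪w, u⟫ - f u) (⟪w, x⟫ - f x) := by
  refine ⟨⟨x, rfl⟩, ?_⟩
  rintro _ ⟨u, rfl⟩
  have := hf.inner_gradient_le_sub hw u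
  rw [inner_sub_right] at this
  dsimp only
  linarith

theorem econj_coe_eq_of_isGreatest {n : ℕ} {g : Euc n → ℝ} {v : Euc n} {r : ℝ}
    (h : IsGreatest (Set.range fun u => ⟪v, u⟫ - g u) r) :
    econj (fun u => (g u : EReal)) v = r := by
  unfold econj
  simp_rw [← EReal.coe_sub]
  apply IsLUB.iSup_eq
  rw [Set.range_comp' (fun x : ℝ => (x : EReal)) (fun u => ⟪v, u⟫ - g u)]
  exact (EReal.coe_strictMono.monotone.map_isGreatest h).isLUB

theorem isGreatest_mul_sub_sq_add_abs {k : ℝ} (hk : 0 < k) (c v : ℝ) :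
    IsGreatest (Set.range fun t => v * t - (k / 2 * t ^ 2 + c * |t|))
      (max 0 (|v| - c) ^ 2 / (2 * k)) := by
  set m := max 0 (|v| - c)
  have hm : 0 ≤ m := le_max_left _ _
  have hm_mul : (|v| - c) * m = m ^ 2 := by
    rcases le_total (|v| - c) 0 with h | h
    · simp [m, max_eq_left h]
    · simp [m, max_eq_right h, sq]
  constructor
  · refine ⟨(if 0 ≤ v then m else -m) / k, ?_⟩
    rcases le_or_gt 0 v with hv | hv
    · simp only [hv, if_true, abs_div, abs_of_nonneg hm, abs_of_pos hk]
      rw [abs_of_nonneg hv] at hm_mul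
      field_simp
      linear_combination 2 * hm_mul
    · simp only [not_le.mpr hv, if_false, abs_div, abs_neg, abs_of_nonneg hm, abs_of_pos hk]
      rw [abs_of_neg hv] at hm_mul
      field_simp
      linear_combination 2 * hm_mul
  · rintro _ ⟨t, rfl⟩
    have hvt : v * t ≤ |v| * |t| := (le_abs_self _).trans (abs_mul v t).le
    have hgap : (|v| - c) * |t| ≤ m * |t| :=
      mul_le_mul_of_nonneg_right (le_max_right _ _) (abs_nonneg t)
    dsimp only
    rw [le_div_iff₀ (by positivity), ← sq_abs t]
    linarith [sq_nonneg (m - k * |t|), mul_le_mul_of_nonneg_left hvt hk.le,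
      mul_le_mul_of_nonneg_left hgap hk.le]

theorem isGreatest_inner_sub_sum {n : ℕ} {φ : Fin n → ℝ → ℝ} {ψ : Fin n → ℝ} {v : Euc n}
    (h : ∀ i, IsGreatest (Set.range fun t => v i * t - φ i t) (ψ i)) :
    IsGreatest (Set.range fun u : Euc n => ⟪v, u⟫ - ∑ i, φ i (u i)) (∑ i, ψ i) := by
  have hinner : ∀ u : Euc n, ⟪v, u⟫ - ∑ i, φ i (u i) = ∑ i, (v i * u i - φ i (u i)) := by
    intro u
    simp [PiLp.inner_apply, Finset.sum_sub_distrib, mul_comm]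
  choose t ht using fun i => (h i).1
  refine ⟨⟨WithLp.toLp 2 t, ?_⟩, ?_⟩
  · dsimp only
    rw [hinner]
    exact Finset.sum_congr rfl fun i _ => ht i
  · rintro _ ⟨u, rfl⟩
    dsimp only
    rw [hinner]
    exact Finset.sum_le_sum fun i _ => (h i).2 ⟨u i, rfl⟩

def elasticNet {n : ℕ} (lam η : ℝ) (b : Euc n) : ℝ :=
  lam * (η / 2 * ∑ i, (b i) ^ 2 + (1 - η) * ∑ i, |b i|)

theorem elasticNet_eq_sum {n : ℕ} (lam η : ℝ) (b : Euc n) :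
    elasticNet lam η b = ∑ i, (η * lam / 2 * b i ^ 2 + (1 - η) * lam * |b i|) := by
  simp only [elasticNet, Finset.sum_add_distrib, ← Finset.mul_sum]
  ring

theorem isGreatest_inner_sub_elasticNet {n : ℕ} {lam η : ℝ} (hηlam : 0 < η * lam) (v : Euc n) :
    IsGreatest (Set.range fun u => ⟪v, u⟫ - elasticNet lam η u)
      (1 / (2 * η * lam) * ∑ i, max 0 (|v i| - (1 - η) * lam) ^ 2) := by
  have hsum := isGreatest_inner_sub_sum fun i =>
    isGreatest_mul_sub_sq_add_abs hηlam ((1 - η) * lam) (v i)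
  simp only [← elasticNet_eq_sum, ← Finset.sum_div] at hsum
  convert hsum using 1
  ring

theorem stmt16_general {d n : ℕ} (A : Euc n →L[ℝ] Euc d)
    (ℓ : Euc d → ℝ) (hconv : ConvexOn ℝ Set.univ ℓ)
    (ℓ' : Euc d → Euc d) (hgrad : ∀ x, HasGradientAt ℓ (ℓ' x) x)
    (lam η : ℝ) (hlam : 0 < lam) (hη : 0 < η)
    (α : Euc n) :
    (econj (fun v => (ℓ v : EReal)) (ℓ' (A α))
        + econj (fun b : Euc n =>
            ((lam * (η / 2 * ∑ i, (b i) ^ 2 + (1 - η) * ∑ i, |b i|) : ℝ) : EReal))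
          (-(ContinuousLinearMap.adjoint A) (ℓ' (A α))))
      + (((ℓ (A α) : ℝ) : EReal)
        + ((lam * (η / 2 * ∑ i, (α i) ^ 2 + (1 - η) * ∑ i, |α i|) : ℝ) : EReal))
    = (((inner ℝ (ℓ' (A α)) (A α) : ℝ)
        + 1 / (2 * η * lam)
            * ∑ i, (max 0 (|(ContinuousLinearMap.adjoint A) (ℓ' (A α)) i|
                - (1 - η) * lam)) ^ 2
        + lam * (η / 2 * ∑ i, (α i) ^ 2 + (1 - η) * ∑ i, |α i|) : ℝ) : EReal) := by
  have hloss := econj_coe_eq_of_isGreatest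
    (hconv.isGreatest_inner_sub_of_hasGradientAt (hgrad (A α)))
  have hreg := econj_coe_eq_of_isGreatest <| isGreatest_inner_sub_elasticNet (mul_pos hη hlam)
    (-(ContinuousLinearMap.adjoint A) (ℓ' (A α)))
  unfold elasticNet at hreg
  rw [hloss, hreg]
  simp only [PiLp.neg_apply, abs_neg]
  norm_cast
  ring

/-- Elastic Net duality gap: for `D(α) = ℓ(Aα) + λ((η/2)‖α‖₂² + (1-η)‖α‖₁)`
and `w = ∇ℓ(Aα)`, the duality gap `G(α) = P(w) + D(α)` equals
`⟨w, Aα⟩ + (1/(2ηλ)) Σᵢ (max{0, |A_{:i}ᵀw| - (1-η)λ})² + λ((η/2)‖α‖₂² + (1-η)‖α‖₁)`. -/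
theorem stmt16 {d n : ℕ} (A : Euc n →L[ℝ] Euc d)
    (ℓ : Euc d → ℝ) (hconv : ConvexOn ℝ Set.univ ℓ)
    (ℓ' : Euc d → Euc d) (hgrad : ∀ x, HasGradientAt ℓ (ℓ' x) x)
    (lam η : ℝ) (hlam : 0 < lam) (hη : 0 < η) (hη1 : η ≤ 1)
    (α : Euc n) :
    (econj (fun v => (ℓ v : EReal)) (ℓ' (A α))
        + econj (fun b : Euc n =>
            ((lam * (η / 2 * ∑ i, (b i) ^ 2 + (1 - η) * ∑ i, |b i|) : ℝ) : EReal))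
          (-(ContinuousLinearMap.adjoint A) (ℓ' (A α))))
      + (((ℓ (A α) : ℝ) : EReal)
        + ((lam * (η / 2 * ∑ i, (α i) ^ 2 + (1 - η) * ∑ i, |α i|) : ℝ) : EReal))
    = (((inner ℝ (ℓ' (A α)) (A α) : ℝ)
        + 1 / (2 * η * lam)
            * ∑ i, (max 0 (|(ContinuousLinearMap.adjoint A) (ℓ' (A α)) i|
                - (1 - η) * lam)) ^ 2
        + lam * (η / 2 * ∑ i, (α i) ^ 2 + (1 - η) * ∑ i, |α i|) : ℝ) : EReal) :=
  stmt16_general A ℓ hconv ℓ' hgrad lam η hlam hη α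
end
end

section
/- Coordinate descent per-step improvement: consider D(α) := f(Aα) + Σᵢ gᵢ(αᵢ), with f (1/β)-smooth w.r.t. ‖·‖ and each gᵢ μ-strongly convex (μ ≥ 0; if μ = 0 assume each gᵢ has bounded support). Let the update pick coordinate i uniformly at random and exactly minimize D along coordinate i. Then for any s ∈ [0,1]: E[D(α) - D(α⁺)] ≥ (s/n)·G(α) - (s²/2)·F, where G(α) = Σᵢ(gᵢ*(-A_{:i}ᵀw) + gᵢ(αᵢ) + αᵢ·A_{:i}ᵀw) with w = ∇f(Aα), and F = (1/n)·Σᵢ ( (1/β)‖A_{:i}‖² - (1-s)μ/s )·(uᵢ - αᵢ)² with uᵢ ∈ ∂gᵢ*(-A_{:i}ᵀ w). -/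
open scoped BigOperators ENNReal
open MeasureTheory

noncomputable section

/-!
Fix a coordinate `i`, write `w = ⟪aᵢ, ∇f(Aα)⟫` and `δ = uᵢ - αᵢ`, and compare the exact minimiser
along coordinate `i` with the trial point `c = αᵢ + s δ`. Smoothness of `f` bounds the increase of
the smooth part by `s w δ + (s² / 2) (‖aᵢ‖² / β) δ²`. A subgradient `r` of `gᵢ` at `c`, combined
with `μ`-strong convexity and with the subgradient inequality of `gᵢ*` at `-w` tested at
`r + μ (uᵢ - c)`, gives `gᵢ(c) ≤ (1 - s) gᵢ(αᵢ) - s (gᵢ*(-w) + w uᵢ) - (μ / 2) s (1 - s) δ²`.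
Adding the two bounds gives the claim for coordinate `i`; averaging over `i` is the expectation.

Since `gᵢ` is not assumed lower semicontinuous, `uᵢ ∈ ∂gᵢ*(-w)` does not give `-w ∈ ∂gᵢ(uᵢ)`,
which is why the subgradient is taken at `c`. It exists for `0 < s < 1` because `c` lies strictly
inside the domain of `gᵢ`: the domain reaches beyond `uᵢ`, or `gᵢ*` could not have slope `uᵢ`
at `-w`. The case `s = 1` follows by letting `s → 1`, and the case `uᵢ = αᵢ` from first-order
optimality of the exact minimiser and convexity of `f`. Finiteness of `gᵢ*(-w)` comes from strong
convexity, or from the bounded domain when `μ = 0`.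
-/

open Set Filter Topology

def EStrongSubgradAt1 (g : ℝ → EReal) (μ x u : ℝ) : Prop :=
  ∀ y, g x + ((u * (y - x) + μ / 2 * (y - x) ^ 2 : ℝ) : EReal) ≤ g y

section OneDimensional

variable {g : ℝ → EReal}

theorem ESubgradAt1.add_mul_le {h : ℝ → EReal} {v u hv : ℝ} (hu : ESubgradAt1 h v u)
    (hhv : h v = hv) {y M : ℝ} (hM : h y ≤ M) : hv + u * (y - v) ≤ M := by
  have := (hu y).trans hM
  rwa [hhv, ← EReal.coe_add, EReal.coe_le_coe_iff] at this

theorem EStrongSubgradAt1.add_mul_le {μ c r gc : ℝ}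
    (hr : EStrongSubgradAt1 g μ c r) (hgc : g c = gc) {y gy : ℝ} (hgy : g y = gy) :
    gc + r * (y - c) + μ / 2 * (y - c) ^ 2 ≤ gy := by
  have := hr y
  rw [hgc, hgy, ← EReal.coe_add, EReal.coe_le_coe_iff] at this
  linarith

theorem EConvex1.convexOn_toReal (hc : EConvex1 g) (hbot : ∀ x, g x ≠ ⊥) :
    ConvexOn ℝ {x | g x ≠ ⊤} (fun x => (g x).toReal) := by
  have key : ∀ x y a b, g x ≠ ⊤ → g y ≠ ⊤ → 0 ≤ a → 0 ≤ b → a + b = 1 →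
      g (a • x + b • y) ≤ ((a * (g x).toReal + b * (g y).toReal : ℝ) : EReal) := by
    intro x y a b hx hy ha hb hab
    have h := hc x y a b ha hb hab
    rw [← EReal.coe_toReal hx (hbot x), ← EReal.coe_toReal hy (hbot y)] at h
    simpa only [smul_eq_mul, EReal.coe_add, EReal.coe_mul] using h
  refine ⟨fun x hx y hy a b ha hb hab => ?_, fun x hx y hy a b ha hb hab => ?_⟩
  · exact ne_top_of_le_ne_top (EReal.coe_ne_top _) (key x y a b hx hy ha hb hab)
  · simpa only [smul_eq_mul, EReal.toReal_coe] using
      EReal.toReal_le_toReal (key x y a b hx hy ha hb hab) (hbot _) (EReal.coe_ne_top _)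

theorem EConvex1.exists_subgrad_of_lt_of_lt (hc : EConvex1 g) (hbot : ∀ x, g x ≠ ⊥)
    {x₁ c x₂ : ℝ} (h₁ : x₁ < c) (h₂ : c < x₂) (hx₁ : g x₁ ≠ ⊤) (hx₂ : g x₂ ≠ ⊤) :
    g c ≠ ⊤ ∧ ∃ r, ESubgradAt1 g c r := by
  set h : ℝ → ℝ := fun x => (g x).toReal
  have hconv := hc.convexOn_toReal hbot
  have hint : c ∈ interior {x | g x ≠ ⊤} :=
    interior_mono ((hconv.1.ordConnected.out hx₁ hx₂).trans' Ioo_subset_Icc_self)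
      (by rw [interior_Ioo]; exact ⟨h₁, h₂⟩)
  have hcS : g c ≠ ⊤ := interior_subset hint
  refine ⟨hcS, derivWithin h (Ioi c) c, fun y => ?_⟩
  by_cases hy : g y = ⊤
  · rw [hy]; exact le_top
  suffices h c + derivWithin h (Ioi c) c * (y - c) ≤ h y by
    rwa [← EReal.coe_toReal hcS (hbot c), ← EReal.coe_toReal hy (hbot y), ← EReal.coe_add,
      EReal.coe_le_coe_iff]
  rcases lt_trichotomy y c with hyc | rfl | hcy
  · have hslope := (hconv.slope_le_leftDeriv_of_mem_interior hy hint hyc).trans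
      (hconv.leftDeriv_le_rightDeriv_of_mem_interior hint)
    rw [slope_def_field, div_le_iff₀ (sub_pos.2 hyc)] at hslope
    linarith
  · simp
  · have hslope := hconv.rightDeriv_le_slope_of_mem_interior hint hy hcy
    rw [slope_def_field, le_div_iff₀ (sub_pos.2 hcy)] at hslope
    linarith

theorem coe_sub_le_econj1 {x gx : ℝ} (hgx : g x = gx) (v : ℝ) :
    ((v * x - gx : ℝ) : EReal) ≤ econj1 g v := by
  rw [EReal.coe_sub, ← hgx]
  exact le_iSup (fun a => ((v * a : ℝ) : EReal) - g a) x

theorem econj1_le_coe (hbot : ∀ x, g x ≠ ⊥) {v M : ℝ}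
    (h : ∀ x gx : ℝ, g x = gx → v * x - gx ≤ M) : econj1 g v ≤ M := by
  refine iSup_le fun x => ?_
  by_cases hx : g x = ⊤
  · rw [hx, EReal.sub_top]; exact bot_le
  · rw [← EReal.coe_toReal hx (hbot x), ← EReal.coe_sub, EReal.coe_le_coe_iff]
    exact h x _ (EReal.coe_toReal hx (hbot x)).symm

theorem econj1_le_of_strongSubgrad (hbot : ∀ x, g x ≠ ⊥) {μ c gc r : ℝ}
    (hμ : 0 ≤ μ) (hgc : g c = gc) (hr : EStrongSubgradAt1 g μ c r) (t : ℝ) :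
    econj1 g (r + μ * t) ≤ (((r + μ * t) * c - gc + μ / 2 * t ^ 2 : ℝ) : EReal) :=
  econj1_le_coe hbot fun x gx hgx => by
    nlinarith [hr.add_mul_le hgc hgx, mul_nonneg hμ (sq_nonneg (x - c - t))]

theorem ESubgradAt1.mul_le_mul_of_dom_econj1 (hbot : ∀ x, g x ≠ ⊥)
    {v gv u : ℝ} (hgv : econj1 g v = gv) (hu : ESubgradAt1 (econj1 g) v u) {t c : ℝ}
    (hdom : ∀ x, g x ≠ ⊤ → t * c ≤ t * x) : t * c ≤ t * u := by
  have hM : econj1 g (v - t) ≤ ((gv - t * c : ℝ) : EReal) := by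
    refine econj1_le_coe hbot fun x gx hgx => ?_
    have hFY : v * x - gx ≤ gv := by exact_mod_cast (coe_sub_le_econj1 hgx v).trans_eq hgv
    linear_combination hFY + hdom x (hgx ▸ EReal.coe_ne_top gx)
  linear_combination hu.add_mul_le hgv hM

theorem econj1_ne_top_of_strongSubgrad (hbot : ∀ x, g x ≠ ⊥) {μ m gm p : ℝ}
    (hμ : 0 ≤ μ) (hgm : g m = gm) (hp : EStrongSubgradAt1 g μ m p)
    (hbs : μ = 0 → ∃ B, ∀ x, g x ≠ ⊤ → |x| ≤ B) (v : ℝ) : econj1 g v ≠ ⊤ := by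
  rcases hμ.eq_or_lt with hμ0 | hμpos
  · obtain ⟨B, hB⟩ := hbs hμ0.symm
    refine ne_top_of_le_ne_top (EReal.coe_ne_top (|v - p| * B + (p * m - gm)))
      (econj1_le_coe hbot fun x gx hgx => ?_)
    have hsub := hp.add_mul_le hgm hgx
    have hx : (v - p) * x ≤ |v - p| * B :=
      calc (v - p) * x ≤ |v - p| * |x| := (le_abs_self _).trans (abs_mul _ _).le
        _ ≤ |v - p| * B :=
          mul_le_mul_of_nonneg_left (hB x (hgx ▸ EReal.coe_ne_top gx)) (abs_nonneg _)
    rw [← hμ0] at hsub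
    linear_combination hsub + hx
  · have h := econj1_le_of_strongSubgrad hbot hμ hgm hp ((v - p) / μ)
    rw [mul_div_cancel₀ _ hμpos.ne', add_sub_cancel] at h
    exact ne_top_of_le_ne_top (EReal.coe_ne_top _) h

theorem EConvex1.exists_subgrad_between (hc : EConvex1 g)
    (hbot : ∀ x, g x ≠ ⊥) {α₀ v gv u σ : ℝ} (hα : g α₀ ≠ ⊤) (hgv : econj1 g v = gv)
    (hu : ESubgradAt1 (econj1 g) v u) (huα : u ≠ α₀) (hσ : σ ∈ Ioo (0 : ℝ) 1) :
    g (α₀ + σ * (u - α₀)) ≠ ⊤ ∧ ∃ r, ESubgradAt1 g (α₀ + σ * (u - α₀)) r := by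
  obtain ⟨hσ0, hσ1⟩ := hσ
  rcases huα.lt_or_gt with hlt | hgt
  · obtain ⟨x, hx, hxc⟩ : ∃ x, g x ≠ ⊤ ∧ x < α₀ + σ * (u - α₀) := by
      by_contra! hdom
      have := hu.mul_le_mul_of_dom_econj1 hbot hgv (t := 1)
        fun x hx => by simpa using hdom x hx
      nlinarith
    exact hc.exists_subgrad_of_lt_of_lt hbot hxc (by nlinarith) hx hα
  · obtain ⟨x, hx, hcx⟩ : ∃ x, g x ≠ ⊤ ∧ α₀ + σ * (u - α₀) < x := by
      by_contra! hdom
      have := hu.mul_le_mul_of_dom_econj1 hbot hgv (t := -1)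
        fun x hx => by simpa using hdom x hx
      nlinarith
    exact hc.exists_subgrad_of_lt_of_lt hbot (by nlinarith) hcx hα hx

theorem ne_top_of_forall_add_le {φ : ℝ → ℝ} {m x : ℝ} (hx : g x ≠ ⊤)
    (hmin : ∀ c, (φ m : EReal) + g m ≤ φ c + g c) : g m ≠ ⊤ := fun h => by
  have := hmin x
  rw [h, EReal.coe_add_top, top_le_iff] at this
  exact EReal.add_ne_top (EReal.coe_ne_top _) hx this

theorem EConvex1.subgrad_of_isMin_add (hc : EConvex1 g) (hbot : ∀ x, g x ≠ ⊥)
    {φ φ' : ℝ → ℝ} {C m : ℝ}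
    (hφ : ∀ x y, φ y ≤ φ x + φ' x * (y - x) + C / 2 * (y - x) ^ 2) (hm : g m ≠ ⊤)
    (hmin : ∀ c, (φ m : EReal) + g m ≤ φ c + g c) : ESubgradAt1 g m (-φ' m) := by
  intro y
  by_cases hy : g y = ⊤
  · rw [hy]; exact le_top
  have hconv := hc.convexOn_toReal hbot
  set K := (g m).toReal - (g y).toReal - φ' m * (y - m)
  have hsecant : ∀ t ∈ Ioc (0 : ℝ) 1, K ≤ C / 2 * (y - m) ^ 2 * t := by
    rintro t ⟨ht0, ht1⟩
    have hz := hconv.1 hm hy (sub_nonneg.2 ht1) ht0.le (sub_add_cancel 1 t)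
    have hgz := hconv.2 hm hy (sub_nonneg.2 ht1) ht0.le (sub_add_cancel 1 t)
    set z := (1 - t) • m + t • y
    have hmz : φ m + (g m).toReal ≤ φ z + (g z).toReal := by
      have := hmin z
      rwa [← EReal.coe_toReal hm (hbot m), ← EReal.coe_toReal hz (hbot z), ← EReal.coe_add,
        ← EReal.coe_add, EReal.coe_le_coe_iff] at this
    have hzm : z - m = t * (y - m) := by simp only [z, smul_eq_mul]; ring
    have hφz := hφ m z
    simp only [smul_eq_mul] at hgz
    rw [hzm] at hφz
    have : t * K ≤ t * (C / 2 * (y - m) ^ 2 * t) := by nlinarith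
    exact le_of_mul_le_mul_left this ht0
  have hlim : Tendsto (fun t => C / 2 * (y - m) ^ 2 * t) (𝓝[>] 0) (𝓝 0) :=
    ((continuous_const_mul _).tendsto' 0 0 (mul_zero _)).mono_left nhdsWithin_le_nhds
  have hK : K ≤ 0 := ge_of_tendsto hlim <| by
    filter_upwards [Ioc_mem_nhdsGT one_pos] with t ht using hsecant t ht
  rw [← EReal.coe_toReal hm (hbot m), ← EReal.coe_toReal hy (hbot y), ← EReal.coe_add,
    EReal.coe_le_coe_iff]
  linarith

theorem EConvex1.coordinate_step_of_mem_Ioo (hc : EConvex1 g) (hbot : ∀ x, g x ≠ ⊥)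
    {μ : ℝ} (hμ : 0 ≤ μ) (hgsc : ∀ x r, ESubgradAt1 g x r → EStrongSubgradAt1 g μ x r)
    {φ φ' : ℝ → ℝ} {C : ℝ} (hφ : ∀ x y, φ y ≤ φ x + φ' x * (y - x) + C / 2 * (y - x) ^ 2)
    {α₀ gα m gm gv u σ : ℝ} (hgα : g α₀ = gα) (hgm : g m = gm)
    (hmin : ∀ c, (φ m : EReal) + g m ≤ φ c + g c) (hgv : econj1 g (-φ' α₀) = gv)
    (hu : ESubgradAt1 (econj1 g) (-φ' α₀) u) (huα : u ≠ α₀) (hσ : σ ∈ Ioo (0 : ℝ) 1) :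
    σ * (gv + gα + α₀ * φ' α₀) - σ ^ 2 * C * (u - α₀) ^ 2 / 2
        + σ * (1 - σ) * μ * (u - α₀) ^ 2 / 2
      ≤ (φ α₀ + gα) - (φ m + gm) := by
  obtain ⟨hcfin, r, hr⟩ :=
    hc.exists_subgrad_between hbot (hgα ▸ EReal.coe_ne_top gα) hgv hu huα hσ
  set c := α₀ + σ * (u - α₀)
  obtain ⟨gc, hgc⟩ : ∃ gc : ℝ, g c = gc := ⟨_, (EReal.coe_toReal hcfin (hbot c)).symm⟩
  have hrs := hgsc c r hr
  have hαc := hrs.add_mul_le hgc hgα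
  have hconj := hu.add_mul_le hgv (econj1_le_of_strongSubgrad hbot hμ hgc hrs (u - c))
  have hmc : φ m + gm ≤ φ c + gc := by
    have := hmin c
    rwa [hgm, hgc, ← EReal.coe_add, ← EReal.coe_add, EReal.coe_le_coe_iff] at this
  have hφc := hφ α₀ c
  linear_combination mul_le_mul_of_nonneg_left hαc (sub_nonneg.2 hσ.2.le)
    + mul_le_mul_of_nonneg_left hconj hσ.1.le + hmc + hφc

theorem EConvex1.coordinate_step (hc : EConvex1 g) (hbot : ∀ x, g x ≠ ⊥)
    {μ : ℝ} (hμ : 0 ≤ μ) (hgsc : ∀ x r, ESubgradAt1 g x r → EStrongSubgradAt1 g μ x r)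
    (hbs : μ = 0 → ∃ B, ∀ x, g x ≠ ⊤ → |x| ≤ B) {φ φ' : ℝ → ℝ} {C : ℝ}
    (hφs : ∀ x y, φ y ≤ φ x + φ' x * (y - x) + C / 2 * (y - x) ^ 2)
    (hφc : ∀ x y, φ x + φ' x * (y - x) ≤ φ y)
    {α₀ m : ℝ} (hα : g α₀ ≠ ⊤) (hmin : ∀ c, (φ m : EReal) + g m ≤ φ c + g c)
    {s u : ℝ} (hs0 : 0 ≤ s) (hs1 : s ≤ 1) (hu : ESubgradAt1 (econj1 g) (-φ' α₀) u) :
    s * ((econj1 g (-φ' α₀)).toReal + (g α₀).toReal + α₀ * φ' α₀)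
        - s ^ 2 / 2 * ((C - (1 - s) * μ / s) * (u - α₀) ^ 2)
      ≤ (φ α₀ + (g α₀).toReal) - (φ m + (g m).toReal) := by
  obtain ⟨gα, hgα⟩ : ∃ gα : ℝ, g α₀ = gα := ⟨_, (EReal.coe_toReal hα (hbot α₀)).symm⟩
  have hm := ne_top_of_forall_add_le hα hmin
  obtain ⟨gm, hgm⟩ : ∃ gm : ℝ, g m = gm := ⟨_, (EReal.coe_toReal hm (hbot m)).symm⟩
  have hp := hgsc m _ (hc.subgrad_of_isMin_add hbot hφs hm hmin)
  have hv_top := econj1_ne_top_of_strongSubgrad hbot hμ hgm hp hbs (-φ' α₀)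
  have hv_bot : econj1 g (-φ' α₀) ≠ ⊥ :=
    ne_bot_of_le_ne_bot (EReal.coe_ne_bot _) (coe_sub_le_econj1 hgα _)
  obtain ⟨gv, hgv⟩ : ∃ gv : ℝ, econj1 g (-φ' α₀) = gv :=
    ⟨_, (EReal.coe_toReal hv_top hv_bot).symm⟩
  have hFY : 0 ≤ gv + gα + α₀ * φ' α₀ := by
    have : -φ' α₀ * α₀ - gα ≤ gv := by exact_mod_cast (coe_sub_le_econj1 hgα _).trans_eq hgv
    linarith
  have hmα : φ m + gm ≤ φ α₀ + gα := by
    have := hmin α₀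
    rwa [hgm, hgα, ← EReal.coe_add, ← EReal.coe_add, EReal.coe_le_coe_iff] at this
  rw [hgα, hgm, hgv]
  simp only [EReal.toReal_coe]
  rcases hs0.eq_or_lt with rfl | hs
  · simpa using hmα
  rcases eq_or_ne u α₀ with rfl | huα
  · have hgap := hu.add_mul_le hgv (econj1_le_of_strongSubgrad hbot hμ hgm hp 0)
    have hG : gv + gα + u * φ' u ≤ (φ u + gα) - (φ m + gm) := by
      linear_combination hgap + hφc m u
    linear_combination hG + mul_le_mul_of_nonneg_right hs1 hFY
  have hcore := fun σ (hσ : σ ∈ Ioo (0 : ℝ) 1) =>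
    hc.coordinate_step_of_mem_Ioo hbot hμ hgsc hφs hgα hgm hmin hgv hu huα hσ
  rcases hs1.lt_or_eq with hs1 | rfl
  · calc s * (gv + gα + α₀ * φ' α₀) - s ^ 2 / 2 * ((C - (1 - s) * μ / s) * (u - α₀) ^ 2)
          = s * (gv + gα + α₀ * φ' α₀) - s ^ 2 * C * (u - α₀) ^ 2 / 2
              + s * (1 - s) * μ * (u - α₀) ^ 2 / 2 := by
            field_simp
            ring
        _ ≤ _ := hcore s ⟨hs, hs1⟩
  · have hcont : Continuous fun σ : ℝ => σ * (gv + gα + α₀ * φ' α₀)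
        - σ ^ 2 * C * (u - α₀) ^ 2 / 2 + σ * (1 - σ) * μ * (u - α₀) ^ 2 / 2 := by
      fun_prop
    have hlim := le_of_tendsto ((hcont.tendsto 1).mono_left (nhdsWithin_le_nhds (s := Iio 1)))
      (by filter_upwards [Ioo_mem_nhdsLT one_pos] with σ hσ using hcore σ hσ)
    norm_num at hlim ⊢
    linarith

end OneDimensional

theorem ConvexOn.add_inner_gradient_le {E : Type*} [NormedAddCommGroup E]
    [InnerProductSpace ℝ E] [CompleteSpace E] {f : E → ℝ} (hf : ConvexOn ℝ univ f) {x g : E}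
    (hg : HasGradientAt f g x) (y : E) : f x + inner ℝ g (y - x) ≤ f y := by
  set L : ℝ →ᵃ[ℝ] E := AffineMap.lineMap x y
  have hψ : HasDerivAt (f ∘ L) (inner ℝ g (y - x)) 0 := by
    simpa using hg.hasFDerivAt.comp_hasDerivAt_of_eq (0 : ℝ) AffineMap.hasDerivAt_lineMap
      (AffineMap.lineMap_apply_zero x y).symm
  have hconv : ConvexOn ℝ univ (f ∘ L) := by simpa using hf.comp_affineMap L
  have := hconv.le_slope_of_hasDerivAt (mem_univ 0) (mem_univ 1) one_pos hψ
  simp only [slope_def_field, Function.comp_apply, L, AffineMap.lineMap_apply_zero,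
    AffineMap.lineMap_apply_one, sub_zero, div_one] at this
  linarith

theorem le_add_inner_smooth_along_line {E : Type*} [NormedAddCommGroup E]
    [InnerProductSpace ℝ E] {f : E → ℝ} {f' : E → E} {N : E → ℝ}
    (hN : ∀ (c : ℝ) x, N (c • x) = |c| * N x) {β : ℝ}
    (hsmooth : ∀ x y, f y ≤ f x + inner ℝ (f' x) (y - x) + 1 / (2 * β) * (N (y - x)) ^ 2)
    (z a : E) (x y : ℝ) :
    f (z + y • a) ≤ f (z + x • a) + inner ℝ a (f' (z + x • a)) * (y - x)
      + 1 / β * N a ^ 2 / 2 * (y - x) ^ 2 := by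
  have h := hsmooth (z + x • a) (z + y • a)
  rw [show z + y • a - (z + x • a) = (y - x) • a by module, hN, real_inner_smul_right,
    real_inner_comm, mul_pow, sq_abs] at h
  linear_combination h

theorem ConvexOn.add_inner_gradient_le_along_line {E : Type*} [NormedAddCommGroup E]
    [InnerProductSpace ℝ E] [CompleteSpace E] {f : E → ℝ} (hf : ConvexOn ℝ univ f)
    {f' : E → E} (hgrad : ∀ x, HasGradientAt f (f' x) x) (z a : E) (x y : ℝ) :
    f (z + x • a) + inner ℝ a (f' (z + x • a)) * (y - x) ≤ f (z + y • a) := by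
  have h := hf.add_inner_gradient_le (hgrad (z + x • a)) (z + y • a)
  rwa [show z + y • a - (z + x • a) = (y - x) • a by module, real_inner_smul_right,
    real_inner_comm, mul_comm] at h

theorem sum_update_smul {ι E : Type*} [Fintype ι] [DecidableEq ι] [AddCommGroup E]
    [Module ℝ E] (α : ι → ℝ) (a : ι → E) (i : ι) (c : ℝ) :
    ∑ j, Function.update α i c j • a j = (∑ j, α j • a j - α i • a i) + c • a i := by
  rw [← Finset.add_sum_erase _ _ (Finset.mem_univ i),
    ← Finset.add_sum_erase _ _ (Finset.mem_univ i), Function.update_self,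
    Finset.sum_congr rfl fun j hj => by rw [Function.update_of_ne (Finset.ne_of_mem_erase hj)]]
  abel

theorem sum_apply_update_eq_add {ι : Type*} [Fintype ι] [DecidableEq ι] (g : ι → ℝ → EReal)
    (α : ι → ℝ) (i : ι) (c : ℝ) :
    ∑ j, g j (Function.update α i c j) = g i c + ∑ j ∈ Finset.univ.erase i, g j (α j) := by
  rw [← Finset.add_sum_erase _ _ (Finset.mem_univ i), Function.update_self,
    Finset.sum_congr rfl fun j hj => by rw [Function.update_of_ne (Finset.ne_of_mem_erase hj)]]

theorem exists_coe_eq_sum {ι : Type*} (s : Finset ι) (x : ι → EReal)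
    (h : ∀ i ∈ s, ∃ r : ℝ, x i = r) : ∃ r : ℝ, ∑ i ∈ s, x i = r :=
  Finset.sum_induction _ (fun y : EReal => ∃ r : ℝ, y = r)
    (fun _ _ ⟨r, hr⟩ ⟨r', hr'⟩ => ⟨r + r', by rw [hr, hr', EReal.coe_add]⟩) ⟨0, rfl⟩ h

def dualObjective {d n : ℕ} (f : Euc d → ℝ) (g : Fin n → ℝ → EReal) (a : Fin n → Euc d)
    (α : Fin n → ℝ) : EReal :=
  (f (∑ j, α j • a j) : EReal) + ∑ j, g j (α j)

theorem dualObjective_update {d n : ℕ} (f : Euc d → ℝ) {g : Fin n → ℝ → EReal}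
    (hbot : ∀ i x, g i x ≠ ⊥) (a : Fin n → Euc d) {α : Fin n → ℝ} (hα : ∀ i, g i (α i) ≠ ⊤)
    (i : Fin n) : ∃ R : ℝ, ∀ c, dualObjective f g a (Function.update α i c)
      = (f ((∑ j, α j • a j - α i • a i) + c • a i) : EReal) + g i c + R := by
  obtain ⟨R, hR⟩ := exists_coe_eq_sum (Finset.univ.erase i) (fun j => g j (α j))
    fun j _ => ⟨_, (EReal.coe_toReal (hα j) (hbot j _)).symm⟩
  exact ⟨R, fun c => by
    rw [dualObjective, sum_update_smul, sum_apply_update_eq_add, hR, add_assoc]⟩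

theorem dualObjective_coordinate_step {d n : ℕ} (a : Fin n → Euc d) {Nf : Euc d → ℝ}
    (hNf : ∀ (c : ℝ) x, Nf (c • x) = |c| * Nf x) {f : Euc d → ℝ} (hconv : ConvexOn ℝ univ f)
    {f' : Euc d → Euc d} (hgrad : ∀ x, HasGradientAt f (f' x) x) {β : ℝ}
    (hsmooth : ∀ x y, f y ≤ f x + inner ℝ (f' x) (y - x) + 1 / (2 * β) * (Nf (y - x)) ^ 2)
    {g : Fin n → ℝ → EReal} (hbot : ∀ i x, g i x ≠ ⊥) {i : Fin n} (hgc : EConvex1 (g i))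
    {μ : ℝ} (hμ : 0 ≤ μ) (hgsc : ∀ x r, ESubgradAt1 (g i) x r → EStrongSubgradAt1 (g i) μ x r)
    (hbs : μ = 0 → ∃ B, ∀ x, g i x ≠ ⊤ → |x| ≤ B)
    {α : Fin n → ℝ} (hα : ∀ j, g j (α j) ≠ ⊤) {q : Fin n → ℝ} (hq1 : ∀ j, j ≠ i → q j = α j)
    (hq2 : ∀ c, dualObjective f g a q ≤ dualObjective f g a (Function.update α i c))
    {s u : ℝ} (hs0 : 0 ≤ s) (hs1 : s ≤ 1)
    (hu : ESubgradAt1 (econj1 (g i)) (-inner ℝ (a i) (f' (∑ j, α j • a j))) u) :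
    s * ((econj1 (g i) (-inner ℝ (a i) (f' (∑ j, α j • a j)))).toReal + (g i (α i)).toReal
        + α i * inner ℝ (a i) (f' (∑ j, α j • a j)))
      - s ^ 2 / 2 * ((1 / β * Nf (a i) ^ 2 - (1 - s) * μ / s) * (u - α i) ^ 2)
    ≤ (dualObjective f g a α - dualObjective f g a q).toReal := by
  obtain ⟨R, hR⟩ := dualObjective_update f hbot a hα i
  set z := ∑ j, α j • a j - α i • a i
  have hzα : z + α i • a i = ∑ j, α j • a j := sub_add_cancel _ _
  have hq : Function.update α i (q i) = q := by
    funext j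
    rcases eq_or_ne j i with rfl | hj
    · simp
    · simp [hj, hq1 j hj]
  have hDα := hR (α i)
  have hDq := hR (q i)
  rw [Function.update_eq_self, hzα] at hDα
  rw [hq] at hDq
  have hmin : ∀ c, (f (z + q i • a i) : EReal) + g i (q i) ≤ f (z + c • a i) + g i c := by
    intro c
    have := hq2 c
    rw [hDq, hR] at this
    exact (EReal.addLECancellable_coe R).add_le_add_iff_right.1 this
  have h1d := hgc.coordinate_step (hbot i) hμ hgsc hbs
    (le_add_inner_smooth_along_line hNf hsmooth z (a i))
    (hconv.add_inner_gradient_le_along_line hgrad z (a i)) (hα i) hmin hs0 hs1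
    (by simpa only [hzα] using hu)
  simp only [hzα] at h1d
  obtain ⟨gα, hgα⟩ : ∃ gα : ℝ, g i (α i) = gα := ⟨_, (EReal.coe_toReal (hα i) (hbot i _)).symm⟩
  have hm := ne_top_of_forall_add_le (φ := fun c => f (z + c • a i)) (hα i) hmin
  obtain ⟨gα, hgα⟩ : ∃ gα : ℝ, g i (α i) = gα := ⟨_, (EReal.coe_toReal (hα i) (hbot i _)).symm⟩
  obtain ⟨gm, hgm⟩ : ∃ gm : ℝ, g i (q i) = gm := ⟨_, (EReal.coe_toReal hm (hbot i _)).symm⟩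
  rw [hgα, hgm, EReal.toReal_coe, EReal.toReal_coe] at h1d
  rw [hDα, hDq, hgα, hgm]
  simp only [← EReal.coe_add, ← EReal.coe_sub, EReal.toReal_coe]
  linarith

theorem stmt18_general {d n : ℕ} (a : Fin n → Euc d)
    (Nf : Euc d → ℝ) (hNf : IsNorm Nf)
    (f : Euc d → ℝ) (hconv : ConvexOn ℝ Set.univ f)
    (f' : Euc d → Euc d) (hgrad : ∀ x, HasGradientAt f (f' x) x)
    (β : ℝ)
    (hsmooth : ∀ x y, f y ≤ f x + (inner ℝ (f' x) (y - x) : ℝ)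
        + 1 / (2 * β) * (Nf (y - x)) ^ 2)
    (g : Fin n → ℝ → EReal)
    (hgp : ∀ i, EProper1 (g i)) (hgc : ∀ i, EConvex1 (g i))
    (μ : ℝ) (hμ : 0 ≤ μ)
    (hgsc : ∀ i x u, ESubgradAt1 (g i) x u → ∀ y,
        g i x + ((u * (y - x) + μ / 2 * (y - x) ^ 2 : ℝ) : EReal) ≤ g i y)
    (hbs : μ = 0 → ∀ i, ∃ B, ∀ x, g i x ≠ ⊤ → |x| ≤ B)
    (α : Fin n → ℝ) (hα : ∀ i, g i (α i) ≠ ⊤)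
    (q : Fin n → Fin n → ℝ)
    (hq1 : ∀ i j, j ≠ i → q i j = α j)
    (hq2 : ∀ (i : Fin n) (c : ℝ),
      ((f (∑ j, q i j • a j) : ℝ) : EReal) + ∑ j, g j (q i j)
        ≤ ((f (∑ j, Function.update α i c j • a j) : ℝ) : EReal)
            + ∑ j, g j (Function.update α i c j))
    (s : ℝ) (hs0 : 0 ≤ s) (hs1 : s ≤ 1)
    (u : Fin n → ℝ)
    (hu : ∀ i, ESubgradAt1 (econj1 (g i))
        (-(inner ℝ (a i) (f' (∑ j, α j • a j)) : ℝ)) (u i)) :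
    s / (n : ℝ) * (∑ i, ((econj1 (g i)
            (-(inner ℝ (a i) (f' (∑ j, α j • a j)) : ℝ))).toReal
          + (g i (α i)).toReal
          + α i * (inner ℝ (a i) (f' (∑ j, α j • a j)) : ℝ)))
      - s ^ 2 / 2 * (1 / (n : ℝ)
          * ∑ i, (1 / β * (Nf (a i)) ^ 2 - (1 - s) * μ / s) * (u i - α i) ^ 2)
    ≤ 1 / (n : ℝ) * ∑ i,
        (((((f (∑ j, α j • a j) : ℝ) : EReal) + ∑ j, g j (α j))
          - (((f (∑ j, q i j • a j) : ℝ) : EReal) + ∑ j, g j (q i j))).toReal) := by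
  have hstep := Finset.sum_le_sum fun i (_ : i ∈ Finset.univ) =>
    dualObjective_coordinate_step a hNf.2.2.1 hconv hgrad hsmooth (fun j => (hgp j).1) (hgc i)
      hμ (hgsc i) (fun h => hbs h i) hα (hq1 i) (hq2 i) hs0 hs1 (hu i)
  rw [Finset.sum_sub_distrib, ← Finset.mul_sum, ← Finset.mul_sum] at hstep
  unfold dualObjective at hstep
  linear_combination (1 / (n : ℝ)) * hstep

/-- coordinate descent per-step improvement: for
`D(α) = f(Σⱼ αⱼ aⱼ) + Σⱼ gⱼ(αⱼ)` with `f` `(1/β)`-smooth and each `gᵢ` `μ`-strongly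
convex (bounded support if `μ = 0`), exact coordinate minimization `q i` of a uniformly
random coordinate `i` satisfies, for any `s ∈ [0,1]` and `uᵢ ∈ ∂gᵢ*(-A_{:i}ᵀw)`:
`E[D(α) - D(α⁺)] ≥ (s/n) G(α) - (s²/2) F`. -/
theorem stmt18 {d n : ℕ} (hn : 0 < n) (a : Fin n → Euc d)
    (Nf : Euc d → ℝ) (hNf : IsNorm Nf)
    (f : Euc d → ℝ) (hconv : ConvexOn ℝ Set.univ f)
    (f' : Euc d → Euc d) (hgrad : ∀ x, HasGradientAt f (f' x) x)
    (β : ℝ) (hβ : 0 < β)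
    (hsmooth : ∀ x y, f y ≤ f x + (inner ℝ (f' x) (y - x) : ℝ)
        + 1 / (2 * β) * (Nf (y - x)) ^ 2)
    (g : Fin n → ℝ → EReal)
    (hgp : ∀ i, EProper1 (g i)) (hgc : ∀ i, EConvex1 (g i))
    (μ : ℝ) (hμ : 0 ≤ μ)
    (hgsc : ∀ i x u, ESubgradAt1 (g i) x u → ∀ y,
        g i x + ((u * (y - x) + μ / 2 * (y - x) ^ 2 : ℝ) : EReal) ≤ g i y)
    (hbs : μ = 0 → ∀ i, ∃ B, ∀ x, g i x ≠ ⊤ → |x| ≤ B)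
    (α : Fin n → ℝ) (hα : ∀ i, g i (α i) ≠ ⊤)
    (q : Fin n → Fin n → ℝ)
    (hq1 : ∀ i j, j ≠ i → q i j = α j)
    (hq2 : ∀ (i : Fin n) (c : ℝ),
      ((f (∑ j, q i j • a j) : ℝ) : EReal) + ∑ j, g j (q i j)
        ≤ ((f (∑ j, Function.update α i c j • a j) : ℝ) : EReal)
            + ∑ j, g j (Function.update α i c j))
    (s : ℝ) (hs0 : 0 ≤ s) (hs1 : s ≤ 1)
    (u : Fin n → ℝ)
    (hu : ∀ i, ESubgradAt1 (econj1 (g i))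
        (-(inner ℝ (a i) (f' (∑ j, α j • a j)) : ℝ)) (u i)) :
    s / (n : ℝ) * (∑ i, ((econj1 (g i)
            (-(inner ℝ (a i) (f' (∑ j, α j • a j)) : ℝ))).toReal
          + (g i (α i)).toReal
          + α i * (inner ℝ (a i) (f' (∑ j, α j • a j)) : ℝ)))
      - s ^ 2 / 2 * (1 / (n : ℝ)
          * ∑ i, (1 / β * (Nf (a i)) ^ 2 - (1 - s) * μ / s) * (u i - α i) ^ 2)
    ≤ 1 / (n : ℝ) * ∑ i,
        (((((f (∑ j, α j • a j) : ℝ) : EReal) + ∑ j, g j (α j))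
          - (((f (∑ j, q i j • a j) : ℝ) : EReal) + ∑ j, g j (q i j))).toReal) :=
  stmt18_general a Nf hNf f hconv f' hgrad β hsmooth g hgp hgc μ hμ hgsc hbs α hα q hq1 hq2 s hs0
    hs1 u hu
end
end
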